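/- Let n ≥ 5 and let ρ: H_n → PU(1,1) be a representation. Define ρJ: H_n → PU(1,1) on the generators by ρJ(r_i) := ρ(r_{n−i}) (indices modulo n, r₀ = r_n). Then ρJ is a well-defined representation of H_n and Area(ρJ) = −Area(ρ). -/

import Mathlib

noncomputable section
open Matrix Complex
namespace HView

abbrev W : Type := Fin 2 → ℂ

def herm (x y : W) : ℂ := x 0 * (starRingEnd ℂ) (y 0) - x 1 * (starRingEnd ℂ) (y 1)

def IsNeg (p : W) : Prop := p ≠ 0 ∧ (herm p p).re < 0
def IsIso (p : W) : Prop := p ≠ 0 ∧ herm p p = 0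
def IsNonpos (p : W) : Prop := p ≠ 0 ∧ (herm p p).re ≤ 0

def triArea (p₁ p₂ p₃ : W) : ℝ :=
  2 * Complex.arg (-(herm p₁ p₂ * herm p₂ p₃ * herm p₃ p₁))

def Jm : Matrix (Fin 2) (Fin 2) ℂ := !![1, 0; 0, -1]

def SU11 : Subgroup (SpecialLinearGroup (Fin 2) ℂ) where
  carrier := {A | (A : Matrix (Fin 2) (Fin 2) ℂ)ᴴ * Jm * (A : Matrix (Fin 2) (Fin 2) ℂ) = Jm}
  one_mem' := by simp
  mul_mem' := by
    intro A B hA hB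
    simp only [Set.mem_setOf_eq] at hA hB ⊢
    have hco : ((A * B : SpecialLinearGroup (Fin 2) ℂ) : Matrix (Fin 2) (Fin 2) ℂ)
        = (A : Matrix (Fin 2) (Fin 2) ℂ) * (B : Matrix (Fin 2) (Fin 2) ℂ) := rfl
    rw [hco, conjTranspose_mul]
    calc (B : Matrix (Fin 2) (Fin 2) ℂ)ᴴ * (A : Matrix (Fin 2) (Fin 2) ℂ)ᴴ * Jm *
          ((A : Matrix (Fin 2) (Fin 2) ℂ) * (B : Matrix (Fin 2) (Fin 2) ℂ))
        = (B : Matrix (Fin 2) (Fin 2) ℂ)ᴴ *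
          ((A : Matrix (Fin 2) (Fin 2) ℂ)ᴴ * Jm * (A : Matrix (Fin 2) (Fin 2) ℂ)) *
          (B : Matrix (Fin 2) (Fin 2) ℂ) := by noncomm_ring
      _ = Jm := by rw [hA]; exact hB
  inv_mem' := by
    intro A hA
    simp only [Set.mem_setOf_eq] at hA ⊢
    have h1 : (A : Matrix (Fin 2) (Fin 2) ℂ) *
        ((A⁻¹ : SpecialLinearGroup (Fin 2) ℂ) : Matrix (Fin 2) (Fin 2) ℂ) = 1 := by
      rw [← Matrix.SpecialLinearGroup.coe_mul, mul_inv_cancel,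
        Matrix.SpecialLinearGroup.coe_one]
    have h2 : ((A⁻¹ : SpecialLinearGroup (Fin 2) ℂ) : Matrix (Fin 2) (Fin 2) ℂ)ᴴ *
        (A : Matrix (Fin 2) (Fin 2) ℂ)ᴴ = 1 := by
      rw [← conjTranspose_mul, h1, conjTranspose_one]
    calc ((A⁻¹ : SpecialLinearGroup (Fin 2) ℂ) : Matrix (Fin 2) (Fin 2) ℂ)ᴴ * Jm *
          ((A⁻¹ : SpecialLinearGroup (Fin 2) ℂ) : Matrix (Fin 2) (Fin 2) ℂ)
        = ((A⁻¹ : SpecialLinearGroup (Fin 2) ℂ) : Matrix (Fin 2) (Fin 2) ℂ)ᴴ *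
          ((A : Matrix (Fin 2) (Fin 2) ℂ)ᴴ * Jm * (A : Matrix (Fin 2) (Fin 2) ℂ)) *
          ((A⁻¹ : SpecialLinearGroup (Fin 2) ℂ) : Matrix (Fin 2) (Fin 2) ℂ) := by rw [hA]
      _ = (((A⁻¹ : SpecialLinearGroup (Fin 2) ℂ) : Matrix (Fin 2) (Fin 2) ℂ)ᴴ *
            (A : Matrix (Fin 2) (Fin 2) ℂ)ᴴ) * Jm *
          ((A : Matrix (Fin 2) (Fin 2) ℂ) *
            ((A⁻¹ : SpecialLinearGroup (Fin 2) ℂ) : Matrix (Fin 2) (Fin 2) ℂ)) := by noncomm_ring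
      _ = Jm := by rw [h1, h2, one_mul, mul_one]


instance : Fact (Even (Fintype.card (Fin 2))) := ⟨by decide⟩

def negOne : SU11 := ⟨-1, by
  show ((-1 : SpecialLinearGroup (Fin 2) ℂ) : Matrix (Fin 2) (Fin 2) ℂ)ᴴ * Jm *
    ((-1 : SpecialLinearGroup (Fin 2) ℂ) : Matrix (Fin 2) (Fin 2) ℂ) = Jm
  simp⟩

lemma negOne_mul_negOne : negOne * negOne = 1 := by
  apply Subtype.ext
  show ((-1 : SpecialLinearGroup (Fin 2) ℂ)) * (-1) = 1
  apply Subtype.ext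
  show ((-1 : Matrix (Fin 2) (Fin 2) ℂ)) * (-1) = 1
  simp

lemma negOne_central (g : SU11) : g * negOne = negOne * g := by
  apply Subtype.ext
  apply Subtype.ext
  show ((g : SpecialLinearGroup (Fin 2) ℂ) : Matrix (Fin 2) (Fin 2) ℂ) * (-1)
      = (-1) * ((g : SpecialLinearGroup (Fin 2) ℂ) : Matrix (Fin 2) (Fin 2) ℂ)
  simp

def pm1 : Subgroup SU11 where
  carrier := {1, negOne}
  one_mem' := Or.inl rfl
  mul_mem' := by
    rintro a b (rfl | ha) (rfl | hb)
    · exact Or.inl (one_mul 1)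
    · rw [Set.mem_singleton_iff] at hb; subst hb
      exact Or.inr (by rw [one_mul]; rfl)
    · rw [Set.mem_singleton_iff] at ha; subst ha
      exact Or.inr (by rw [mul_one]; rfl)
    · rw [Set.mem_singleton_iff] at ha hb; subst ha; subst hb
      exact Or.inl negOne_mul_negOne
  inv_mem' := by
    rintro a (rfl | ha)
    · exact Or.inl inv_one
    · rw [Set.mem_singleton_iff] at ha; subst ha
      refine Or.inr ?_
      rw [Set.mem_singleton_iff, inv_eq_iff_mul_eq_one, negOne_mul_negOne]

instance pm1_normal : pm1.Normal := by
  constructor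
  intro x hx g
  rcases hx with rfl | hx
  · simpa using pm1.one_mem
  · rw [Set.mem_singleton_iff] at hx; subst hx
    have h : g * negOne * g⁻¹ = negOne := by
      rw [negOne_central, mul_assoc, mul_inv_cancel, mul_one]
    rw [h]
    exact Or.inr rfl

abbrev PU11 := SU11 ⧸ pm1

def mobius (A : SU11) (z : ℂ) : ℂ :=
  (((A : SpecialLinearGroup (Fin 2) ℂ) : Matrix (Fin 2) (Fin 2) ℂ) 0 0 * z +
    ((A : SpecialLinearGroup (Fin 2) ℂ) : Matrix (Fin 2) (Fin 2) ℂ) 0 1) /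
  (((A : SpecialLinearGroup (Fin 2) ℂ) : Matrix (Fin 2) (Fin 2) ℂ) 1 0 * z +
    ((A : SpecialLinearGroup (Fin 2) ℂ) : Matrix (Fin 2) (Fin 2) ℂ) 1 1)

lemma mobius_mul_negOne (A : SU11) (z : ℂ) : mobius (A * negOne) z = mobius A z := by
  have hm : (((A * negOne : SU11) : SpecialLinearGroup (Fin 2) ℂ) : Matrix (Fin 2) (Fin 2) ℂ)
      = -(((A : SpecialLinearGroup (Fin 2) ℂ) : Matrix (Fin 2) (Fin 2) ℂ)) := by
    show ((A : SpecialLinearGroup (Fin 2) ℂ) : Matrix (Fin 2) (Fin 2) ℂ) *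
      (-1 : Matrix (Fin 2) (Fin 2) ℂ) = _
    simp
  set M := ((A : SpecialLinearGroup (Fin 2) ℂ) : Matrix (Fin 2) (Fin 2) ℂ) with hM
  unfold mobius
  rw [hm]
  simp only [Matrix.neg_apply]
  rw [show -M 0 0 * z + -M 0 1 = -(M 0 0 * z + M 0 1) by ring,
    show -M 1 0 * z + -M 1 1 = -(M 1 0 * z + M 1 1) by ring, neg_div_neg_eq]

def pact (g : PU11) : ℂ → ℂ :=
  Quotient.liftOn' g (fun A => mobius A) (by
    intro a b hab
    have hab' : a⁻¹ * b ∈ pm1 := QuotientGroup.leftRel_apply.mp hab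
    have key : b = a ∨ b = a * negOne := by
      rcases hab' with h | h
      · left
        have : a⁻¹ * b = 1 := h
        rw [inv_mul_eq_one] at this
        exact this.symm
      · right
        rw [Set.mem_singleton_iff] at h
        rw [inv_mul_eq_iff_eq_mul] at h
        exact h
    funext z
    rcases key with rfl | rfl
    · rfl
    · exact (mobius_mul_negOne a z).symm)

lemma pact_mk (A : SU11) (z : ℂ) : pact (QuotientGroup.mk A : PU11) z = mobius A z := rfl


instance : TopologicalSpace (SpecialLinearGroup (Fin 2) ℂ) :=
  instTopologicalSpaceSubtype

def IsHyperbolic (g : PU11) : Prop :=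
  ∃ A : SU11, (QuotientGroup.mk A : PU11) = g ∧
    (Matrix.trace ((A : SpecialLinearGroup (Fin 2) ℂ) : Matrix (Fin 2) (Fin 2) ℂ)).im = 0 ∧
    2 < |(Matrix.trace ((A : SpecialLinearGroup (Fin 2) ℂ) : Matrix (Fin 2) (Fin 2) ℂ)).re|

def IsAttractor (g : PU11) (z : ℂ) : Prop :=
  ‖z‖ = 1 ∧ ∃ A : SU11, (QuotientGroup.mk A : PU11) = g ∧
    ∃ lam : ℂ, 1 < ‖lam‖ ∧
      ((A : SpecialLinearGroup (Fin 2) ℂ) : Matrix (Fin 2) (Fin 2) ℂ).mulVec ![z, 1]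
        = lam • ![z, 1]

def IsRepeller (g : PU11) (z : ℂ) : Prop :=
  ‖z‖ = 1 ∧ ∃ A : SU11, (QuotientGroup.mk A : PU11) = g ∧
    ∃ lam : ℂ, ‖lam‖ < 1 ∧
      ((A : SpecialLinearGroup (Fin 2) ℂ) : Matrix (Fin 2) (Fin 2) ℂ).mulVec ![z, 1]
        = lam • ![z, 1]

def IsPositiveCycle (l : List ℂ) : Prop :=
  3 ≤ l.length ∧ ∃ t : Fin l.length → ℝ,
    StrictMono t ∧ (∀ j k : Fin l.length, t j - t k < 2 * Real.pi) ∧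
    ∀ j : Fin l.length, l.get j = Complex.exp (Complex.I * (t j : ℂ))

def IsNegativeCycle (l : List ℂ) : Prop :=
  3 ≤ l.length ∧ ∃ t : Fin l.length → ℝ,
    StrictAnti t ∧ (∀ j k : Fin l.length, t j - t k < 2 * Real.pi) ∧
    ∀ j : Fin l.length, l.get j = Complex.exp (Complex.I * (t j : ℂ))

def longRel (n : ℕ) : FreeGroup (ZMod n) :=
  (((List.range n).map (fun k => FreeGroup.of ((k + 1 : ℕ) : ZMod n))).reverse).prod

def Hrels (n : ℕ) : Set (FreeGroup (ZMod n)) :=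
  {x | ∃ i : ZMod n, x = FreeGroup.of i * FreeGroup.of i} ∪ {longRel n}

abbrev H (n : ℕ) := PresentedGroup (Hrels n)

def r (n : ℕ) (i : ZMod n) : H n := PresentedGroup.of i

def pts {n : ℕ} (A : ZMod n → SU11) (p : W) : ℕ → W
  | 0 => p
  | (k+1) => (((A ((k + 1 : ℕ) : ZMod n) : SpecialLinearGroup (Fin 2) ℂ)
      : Matrix (Fin 2) (Fin 2) ℂ)).mulVec (pts A p k)

def IsLift {n : ℕ} (ρ : H n →* PU11) (A : ZMod n → SU11) : Prop :=
  (∀ i : ZMod n, (QuotientGroup.mk (A i) : PU11) = ρ (r n i)) ∧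
  ((((List.range n).map (fun k => A ((k + 1 : ℕ) : ZMod n))).reverse).prod = 1 ∨
   (((List.range n).map (fun k => A ((k + 1 : ℕ) : ZMod n))).reverse).prod = negOne)

def areaRep (n : ℕ) (A : ZMod n → SU11) (c p : W) : ℝ :=
  ∑ i ∈ Finset.range n, triArea c (pts A p (i + 1)) (pts A p (i + 2))

def HasArea {n : ℕ} (ρ : H n →* PU11) (a : ℝ) : Prop :=
  ∀ A : ZMod n → SU11, IsLift ρ A → ∀ c p : W, IsNeg c → IsNeg p → areaRep n A c p = a

def orbitSeq {n : ℕ} (ρ : H n →* PU11) (j : ZMod n) (z : ℂ) : ℕ → ℂ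
  | 0 => z
  | (k+1) => pact (ρ (r n (j + (k : ℕ)))) (orbitSeq ρ j z k)

def iCycle {n : ℕ} (ρ : H n →* PU11) (i : ZMod n) (b e : ℂ) : List ℂ :=
  ((List.range (n - 2)).map (fun k => [orbitSeq ρ (i + 1) b k, orbitSeq ρ (i + 1) e k])).flatten

def IsReflection (g : PU11) (q : W) : Prop :=
  ∃ A : SU11, (QuotientGroup.mk A : PU11) = g ∧
    ∀ x : W, ((A : SpecialLinearGroup (Fin 2) ℂ) : Matrix (Fin 2) (Fin 2) ℂ).mulVec x
      = Complex.I • (x - (2 * herm x q / herm q q) • q)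

def Gsub (n : ℕ) : Subgroup (H n) :=
  Subgroup.closure {x : H n | ∃ i j : ZMod n, x = r n i * r n j}

lemma rr_mem (n : ℕ) (i j : ZMod n) : r n i * r n j ∈ Gsub n :=
  Subgroup.subset_closure ⟨i, j, rfl⟩

lemma rrrr_mem (n : ℕ) (i j k l : ZMod n) :
    r n i * r n j * r n k * r n l ∈ Gsub n := by
  have h : r n i * r n j * r n k * r n l = (r n i * r n j) * (r n k * r n l) := by
    rw [mul_assoc]
  rw [h]
  exact mul_mem (rr_mem n i j) (rr_mem n k l)

def v (n : ℕ) (k : ℕ) : H n :=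
  (((List.range (k % n)).map (fun m => r n ((m + 1 : ℕ) : ZMod n))).reverse).prod

def w0 (n : ℕ) (i : ℕ) : H n := if Even i then v n i else v n i * r n 0

def w (n : ℕ) (j : ℕ) : H n :=
  if j % (2 * n - 2) ≤ n - 2 then w0 n (j % (2 * n - 2))
  else r n 0 * w0 n (j % (2 * n - 2) - (n - 1)) * r n 0

def IsLiftGW {n : ℕ} (ρ : ↥(Gsub n) →* PU11) (u : ℕ → H n) (B : ℕ → SU11) : Prop :=
  ∀ (j : ℕ) (h : u j ∈ Gsub n), (QuotientGroup.mk (B j) : PU11) = ρ ⟨u j, h⟩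

def areaG (n : ℕ) (B : ℕ → SU11) (c p q : W) : ℝ :=
  ∑ j ∈ Finset.range (2 * n - 2),
    triArea c
      (((B j : SpecialLinearGroup (Fin 2) ℂ) : Matrix (Fin 2) (Fin 2) ℂ).mulVec
        (if Even j then p else q))
      (((B ((j + 1) % (2 * n - 2)) : SpecialLinearGroup (Fin 2) ℂ)
          : Matrix (Fin 2) (Fin 2) ℂ).mulVec
        (if Even ((j + 1) % (2 * n - 2)) then p else q))

def HasAreaG {n : ℕ} (ρ : ↥(Gsub n) →* PU11) (a : ℝ) : Prop :=
  ∀ B : ℕ → SU11, IsLiftGW ρ (w n) B →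
    ∀ c p q : W, IsNeg c → IsNeg p → IsNeg q → areaG n B c p q = a

def bigCycle (n : ℕ) (s t s' t' : ZMod n → ℂ) (wd : ℕ → ℂ) : List ℂ :=
  [t 1, s 2, wd 2] ++
  ((List.range (n - 4)).map
    (fun k => [s ((k + 3 : ℕ) : ZMod n), t ((k + 3 : ℕ) : ZMod n), wd (k + 3)])).flatten ++
  [t ((n - 1 : ℕ) : ZMod n), s ((n : ℕ) : ZMod n)] ++
  [s' 2, wd (n + 1)] ++
  ((List.range (n - 4)).map
    (fun k => [s' ((k + 3 : ℕ) : ZMod n), t' ((k + 3 : ℕ) : ZMod n), wd (n + k + 2)])).flatten ++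
  [t' ((n - 1 : ℕ) : ZMod n)]

def IsSE {n : ℕ} (ρ ρ' : H n →* PU11) (i : ZMod n) (t : ℝ) : Prop :=
  IsHyperbolic (ρ (r n i * r n (i - 1))) ∧
  ∃ φ : ℝ → PU11, Continuous φ ∧ (∀ s u : ℝ, φ (s + u) = φ s * φ u) ∧
    IsHyperbolic (φ 1) ∧ φ 1 * φ 1 = ρ (r n i * r n (i - 1)) ∧
    (∀ j : ZMod n, j ≠ i - 1 → j ≠ i → ρ' (r n j) = ρ (r n j)) ∧
    ρ' (r n (i - 1)) = φ t * ρ (r n (i - 1)) * (φ t)⁻¹ ∧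
    ρ' (r n i) = φ t * ρ (r n i) * (φ t)⁻¹

def ConjRep {n : ℕ} (ρ ρ' : H n →* PU11) : Prop :=
  ∃ g : PU11, ∀ h : H n, ρ' h = g * ρ h * g⁻¹

def NormalizedAt {n : ℕ} (ρ : H n →* PU11) (i : ZMod n) : Prop :=
  IsRepeller (ρ (r n i * r n (i - 1))) (-1) ∧
  IsAttractor (ρ (r n i * r n (i - 1))) 1 ∧
  pact (ρ (r n i)) 0 = 0

def PPlus {n : ℕ} (ρ : H n →* PU11) : Prop :=
  Function.Injective ρ ∧ DiscreteTopology (MonoidHom.range ρ) ∧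
  HasArea ρ (((n : ℝ) - 4) * Real.pi)

def tupleAt {n : ℕ} (ρ : H n →* PU11) (i : ZMod n) : List ℂ :=
  (iCycle ρ i (-1) 1).drop 2

def KPlusL (n : ℕ) (l : List ℂ) : Prop :=
  l.length = 2 * n - 6 ∧ (∀ z ∈ l, ‖z‖ = 1 ∧ 0 < z.im) ∧ IsPositiveCycle l

def PrelsList (n : ℕ) : Set (FreeGroup (ZMod n)) :=
  { ((List.range n).map (fun k => FreeGroup.of ((n - k : ℕ) : ZMod n))).prod,
    ((List.range (n / 2)).map (fun k => FreeGroup.of ((n - 2 * k : ℕ) : ZMod n))).prod,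
    ((List.range (n / 2)).map (fun k => FreeGroup.of ((n - 1 - 2 * k : ℕ) : ZMod n))).prod }

abbrev Pgrp (n : ℕ) := PresentedGroup (PrelsList n)

def gp (n : ℕ) (i : ZMod n) : Pgrp n := PresentedGroup.of i


/-!
If `B` lifts `ρJ`, then `i ↦ B (-i)` lifts `ρ`. Let `Q` be the `B`-orbit of `p`. Since
`B_j² = ±1` and `(2n : ZMod n) = 0`, the orbit of `Q (2n-1)` under the lift `i ↦ B (-i)` is,
up to signs, `Q (2n-1), Q (2n-2), …`: it runs through the triangles `Δ(c, Q k, Q (k+1))` backwards.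
Reversing a triangle with negative vertices negates its area, because the triple product
`⟨c,x⟩⟨x,y⟩⟨y,c⟩` then has negative real part (Gram identity plus the reverse Cauchy–Schwarz
inequality), so conjugation negates the `arg` of its negative. As `Q` is `n`-periodic up to sign,
both area sums run over the same `n` triangles.
-/

open ComplexConjugate

theorem _root_.Function.Periodic.sum_range_add {M : Type*} [AddCommGroup M] {g : ℕ → M} {n : ℕ}
    (hg : Function.Periodic g n) (m : ℕ) :
    ∑ i ∈ Finset.range n, g (m + i) = ∑ i ∈ Finset.range n, g i := by
  induction m with
  | zero => simp
  | succ m ih =>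
    have h := Finset.sum_range_succ' (fun i => g (m + i)) n
    rw [Finset.sum_range_succ, ih, add_zero, hg] at h
    simpa only [add_assoc, add_comm 1, add_right_cancel_iff] using h.symm

lemma herm_eq_dotProduct (x y : W) : herm x y = star y ⬝ᵥ (Jm *ᵥ x) := by
  simp only [herm, Jm, dotProduct, mulVec, Fin.sum_univ_two, Pi.star_apply, RCLike.star_def,
    of_apply, cons_val', cons_val_fin_one, cons_val_zero, cons_val_one]
  ring

def toMat : SU11 →* Matrix (Fin 2) (Fin 2) ℂ :=
  SpecialLinearGroup.coeMonoidHom.comp SU11.subtype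

lemma toMat_apply (A : SU11) :
    toMat A = ((A : SpecialLinearGroup (Fin 2) ℂ) : Matrix (Fin 2) (Fin 2) ℂ) := rfl

lemma herm_toMat_mulVec (A : SU11) (x y : W) :
    herm (toMat A *ᵥ x) (toMat A *ᵥ y) = herm x y := by
  rw [herm_eq_dotProduct, herm_eq_dotProduct, star_mulVec, ← dotProduct_mulVec, mulVec_mulVec,
    mulVec_mulVec, show (toMat A)ᴴ * Jm * toMat A = Jm from A.2]

lemma herm_comm (x y : W) : herm y x = conj (herm x y) := by
  simp only [herm, map_sub, map_mul, conj_conj]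
  ring

lemma herm_neg_left (x y : W) : herm (-x) y = -herm x y := by
  simp only [herm, Pi.neg_apply]
  ring

lemma herm_neg_right (x y : W) : herm x (-y) = -herm x y := by
  simp only [herm, Pi.neg_apply, map_neg]
  ring

lemma triArea_neg_left (c x y : W) : triArea c (-x) y = triArea c x y := by
  simp [triArea, herm_neg_left, herm_neg_right]

lemma triArea_neg_right (c x y : W) : triArea c x (-y) = triArea c x y := by
  simp [triArea, herm_neg_left, herm_neg_right]

lemma re_herm_mul_re_herm_le_normSq (x y : W) :
    (herm x x).re * (herm y y).re ≤ normSq (herm x y) := by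
  have key : normSq (herm x y) - (herm x x).re * (herm y y).re
      = normSq (x 0 * y 1 - x 1 * y 0) := by
    simp only [herm, normSq_apply, Complex.mul_re, Complex.mul_im, Complex.sub_re,
      Complex.sub_im, Complex.conj_re, Complex.conj_im]
    ring
  linarith [normSq_nonneg (x 0 * y 1 - x 1 * y 0)]

lemma two_mul_re_herm_triple (a b c : W) :
    2 * (herm a b * herm b c * herm c a).re
      = (herm a a).re * normSq (herm b c) + (herm b b).re * normSq (herm c a)
        + (herm c c).re * normSq (herm a b) - (herm a a).re * (herm b b).re * (herm c c).re := by
  simp only [herm, normSq_apply, Complex.mul_re, Complex.mul_im, Complex.sub_re,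
    Complex.sub_im, Complex.conj_re, Complex.conj_im]
  ring

lemma re_herm_triple_neg {a b c : W} (ha : (herm a a).re < 0) (hb : (herm b b).re < 0)
    (hc : (herm c c).re < 0) : (herm a b * herm b c * herm c a).re < 0 := by
  have hbc := mul_le_mul_of_nonpos_left (re_herm_mul_re_herm_le_normSq b c) ha.le
  have hca := mul_le_mul_of_nonpos_left (re_herm_mul_re_herm_le_normSq c a) hb.le
  have hab := mul_le_mul_of_nonpos_left (re_herm_mul_re_herm_le_normSq a b) hc.le
  have habc := mul_neg_of_pos_of_neg (mul_pos_of_neg_of_neg ha hb) hc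
  linarith [two_mul_re_herm_triple a b c]

lemma triArea_swap {c x y : W} (hc : (herm c c).re < 0) (hx : (herm x x).re < 0)
    (hy : (herm y y).re < 0) : triArea c y x = -triArea c x y := by
  have hconj : -(herm c y * herm y x * herm x c) = conj (-(herm c x * herm x y * herm y c)) := by
    rw [herm_comm y c, herm_comm x y, herm_comm c x]
    simp only [map_neg, map_mul]
    ring
  have hpi : arg (-(herm c x * herm x y * herm y c)) ≠ Real.pi := by
    rw [Ne, arg_eq_pi_iff, neg_re]
    exact fun h => by linarith [h.1, re_herm_triple_neg hc hx hy]
  rw [triArea, triArea, hconj, arg_conj, if_neg hpi]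
  ring

lemma r_mul_self (n : ℕ) (i : ZMod n) : r n i * r n i = 1 :=
  PresentedGroup.one_of_mem (Or.inl ⟨i, rfl⟩)

lemma r_inv (n : ℕ) (i : ZMod n) : (r n i)⁻¹ = r n i :=
  inv_eq_of_mul_eq_one_right (r_mul_self n i)

lemma prod_reverse_r_eq_one (n : ℕ) :
    ((List.range n).map fun k => r n ((k + 1 : ℕ) : ZMod n)).reverse.prod = 1 := by
  have h : PresentedGroup.mk (Hrels n) (longRel n) = 1 := PresentedGroup.one_of_mem (Or.inr rfl)
  simpa [longRel, map_list_prod, List.map_reverse, Function.comp_def, r, PresentedGroup.of] using h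

lemma prod_r_succ_eq_one (n : ℕ) :
    ((List.range n).map fun k => r n ((k + 1 : ℕ) : ZMod n)).prod = 1 := by
  have h := prod_reverse_r_eq_one n
  rw [List.prod_reverse_noncomm, inv_eq_one] at h
  simpa only [List.map_map, Function.comp_def, r_inv] using h

lemma prod_r_eq_one (n : ℕ) : ((List.range n).map fun k : ℕ => r n (k : ZMod n)).prod = 1 := by
  rcases n with _ | m
  · rfl
  · have h := prod_r_succ_eq_one (m + 1)
    rw [List.prod_range_succ, ZMod.natCast_self, ← Nat.cast_zero] at h
    rw [List.prod_range_succ']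
    exact mul_eq_one_comm.mp h

lemma prod_reverse_r_neg_eq_one (n : ℕ) :
    ((List.range n).map fun k => r n (-((k + 1 : ℕ) : ZMod n))).reverse.prod = 1 := by
  rw [← List.map_reverse, List.range_eq_range', List.reverse_range', List.map_map,
    ← prod_r_eq_one n]
  congr 1
  refine List.map_congr_left fun k hk => ?_
  replace hk : k < n := List.mem_range.mp hk
  simp only [Function.comp_apply, zero_add]
  congr 1
  rw [neg_eq_iff_add_eq_zero, ← Nat.cast_add, show n - 1 - k + 1 + k = n by omega,
    ZMod.natCast_self]

def negIndex (n : ℕ) : H n →* H n :=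
  PresentedGroup.toGroup (f := fun i => r n (-i)) <| by
    rintro x (⟨i, rfl⟩ | rfl)
    · simp [r_mul_self]
    · simpa [longRel, map_list_prod, List.map_reverse, Function.comp_def]
        using prod_reverse_r_neg_eq_one n

lemma negIndex_r (n : ℕ) (i : ZMod n) : negIndex n (r n i) = r n (-i) :=
  PresentedGroup.toGroup.of _

def EqUpToSign (x y : W) : Prop := x = y ∨ x = -y

namespace EqUpToSign

lemma refl (x : W) : EqUpToSign x x := Or.inl rfl

lemma trans {x y z : W} (hxy : EqUpToSign x y) (hyz : EqUpToSign y z) : EqUpToSign x z := by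
  rcases hxy with rfl | rfl <;> rcases hyz with rfl | rfl
  exacts [.inl rfl, .inr rfl, .inr rfl, .inl (neg_neg z)]

lemma mulVec {x y : W} (M : Matrix (Fin 2) (Fin 2) ℂ) (h : EqUpToSign x y) :
    EqUpToSign (M *ᵥ x) (M *ᵥ y) := by
  rcases h with rfl | rfl
  exacts [.inl rfl, .inr (mulVec_neg _ _)]

lemma triArea_left {c x x' y : W} (h : EqUpToSign x x') : triArea c x y = triArea c x' y := by
  rcases h with rfl | rfl
  exacts [rfl, triArea_neg_left c x' y]

lemma triArea_right {c x y y' : W} (h : EqUpToSign y y') : triArea c x y = triArea c x y' := by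
  rcases h with rfl | rfl
  exacts [rfl, triArea_neg_right c x y']

end EqUpToSign

lemma mk_eq_one_iff (A : SU11) : (QuotientGroup.mk A : PU11) = 1 ↔ A = 1 ∨ A = negOne :=
  QuotientGroup.eq_one_iff A

lemma toMat_negOne : toMat negOne = -1 := by
  rw [toMat_apply, negOne, SpecialLinearGroup.coe_neg]
  rfl

lemma toMat_mulVec_eqUpToSign {A : SU11} (hA : (QuotientGroup.mk A : PU11) = 1) (v : W) :
    EqUpToSign (toMat A *ᵥ v) v := by
  rcases (mk_eq_one_iff A).mp hA with rfl | rfl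
  · exact .inl (by simp)
  · exact .inr (by rw [toMat_negOne, neg_mulVec, one_mulVec])

lemma isLift_iff {n : ℕ} {ρ : H n →* PU11} {A : ZMod n → SU11} :
    IsLift ρ A ↔ ∀ i, (QuotientGroup.mk (A i) : PU11) = ρ (r n i) := by
  refine ⟨And.left, fun hA => ⟨hA, (mk_eq_one_iff _).mp ?_⟩⟩
  have hρ := congrArg ρ (prod_reverse_r_eq_one n)
  rw [map_list_prod, List.map_reverse, List.map_map, map_one] at hρ
  rw [← QuotientGroup.mk'_apply, map_list_prod, List.map_reverse, List.map_map, ← hρ]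
  simp only [Function.comp_def, QuotientGroup.mk'_apply, hA]

lemma IsLift.mk_mul_self {n : ℕ} {ρ : H n →* PU11} {A : ZMod n → SU11} (hA : IsLift ρ A)
    (j : ZMod n) : (QuotientGroup.mk (A j * A j) : PU11) = 1 := by
  rw [QuotientGroup.mk_mul, hA.1, ← map_mul, r_mul_self, map_one]

section Points

variable {n : ℕ}

lemma pts_succ (A : ZMod n → SU11) (p : W) (k : ℕ) :
    pts A p (k + 1) = toMat (A ((k + 1 : ℕ) : ZMod n)) *ᵥ pts A p k := rfl

lemma pts_eq_toMat_prod_mulVec (A : ZMod n → SU11) (p : W) (k : ℕ) :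
    pts A p k
      = toMat ((List.range k).map fun m => A ((m + 1 : ℕ) : ZMod n)).reverse.prod *ᵥ p := by
  induction k with
  | zero => simp [pts]
  | succ k ih =>
    rw [pts_succ, ih, List.range_succ, List.map_append, List.reverse_append, List.prod_append,
      map_mul, mulVec_mulVec]
    simp

lemma isNeg_toMat_mulVec (A : SU11) {p : W} (hp : IsNeg p) : IsNeg (toMat A *ᵥ p) := by
  have hre : (herm (toMat A *ᵥ p) (toMat A *ᵥ p)).re < 0 := by
    rw [herm_toMat_mulVec]
    exact hp.2
  refine ⟨fun h => ?_, hre⟩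
  simp [h, herm] at hre

lemma isNeg_pts (A : ZMod n → SU11) {p : W} (hp : IsNeg p) (k : ℕ) : IsNeg (pts A p k) := by
  induction k with
  | zero => exact hp
  | succ k ih => exact isNeg_toMat_mulVec _ ih

lemma pts_add_eqUpToSign {ρ : H n →* PU11} {A : ZMod n → SU11} (hA : IsLift ρ A) (p : W)
    (k : ℕ) : EqUpToSign (pts A p (k + n)) (pts A p k) := by
  induction k with
  | zero =>
    rw [zero_add, pts_eq_toMat_prod_mulVec]
    exact toMat_mulVec_eqUpToSign ((mk_eq_one_iff _).mpr hA.2) p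
  | succ k ih =>
    rw [add_right_comm, pts_succ, pts_succ,
      show ((k + n + 1 : ℕ) : ZMod n) = ((k + 1 : ℕ) : ZMod n) by simp]
    exact ih.mulVec _

lemma pts_neg_eqUpToSign {A : ZMod n → SU11} (hA : ∀ j, (QuotientGroup.mk (A j * A j) : PU11) = 1)
    (p : W) {m : ℕ} (hm : ((m + 1 : ℕ) : ZMod n) = 0) {k : ℕ} (hk : k ≤ m) :
    EqUpToSign (pts (fun i => A (-i)) (pts A p m) k) (pts A p (m - k)) := by
  induction k with
  | zero => exact .refl _
  | succ k ih =>
    have hidx : -((k + 1 : ℕ) : ZMod n) = ((m - k : ℕ) : ZMod n) := by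
      rw [neg_eq_iff_add_eq_zero, ← Nat.cast_add, ← hm]
      congr 1
      omega
    have hsucc : pts A p (m - k) = toMat (A ((m - k : ℕ) : ZMod n)) *ᵥ pts A p (m - (k + 1)) := by
      rw [show m - k = m - (k + 1) + 1 by omega]
      rfl
    rw [pts_succ, hidx]
    refine ((ih (by omega)).mulVec _).trans ?_
    rw [hsucc, mulVec_mulVec, ← map_mul]
    exact toMat_mulVec_eqUpToSign (hA _) _

end Points

lemma areaRep_neg_index {n : ℕ} (hn : 2 ≤ n) {σ : H n →* PU11} {B : ZMod n → SU11}
    (hB : IsLift σ B) {c p : W} (hc : IsNeg c) (hp : IsNeg p) :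
    areaRep n (fun i => B (-i)) c (pts B p (2 * n - 1)) = -areaRep n B c p := by
  set Q := pts B p
  set g : ℕ → ℝ := fun k => triArea c (Q k) (Q (k + 1))
  have hg : Function.Periodic g n := fun k => by
    simp only [g, add_right_comm k n 1]
    rw [(pts_add_eqUpToSign hB p k).triArea_left, (pts_add_eqUpToSign hB p (k + 1)).triArea_right]
  have hB_area : areaRep n B c p = ∑ i ∈ Finset.range n, g i := by
    rw [← hg.sum_range_add 1]
    simp only [areaRep, g, add_comm 1]
    rfl
  have hm : ((2 * n - 1 + 1 : ℕ) : ZMod n) = 0 := by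
    rw [show 2 * n - 1 + 1 = 2 * n by omega]
    simp
  have hP := fun k (hk : k ≤ 2 * n - 1) => pts_neg_eqUpToSign hB.mk_mul_self p hm hk
  calc areaRep n (fun i => B (-i)) c (pts B p (2 * n - 1))
      = ∑ i ∈ Finset.range n, -g (n - 2 + (n - 1 - i)) := by
        refine Finset.sum_congr rfl fun i hi => ?_
        have hi : i < n := Finset.mem_range.mp hi
        rw [(hP (i + 1) (by omega)).triArea_left, (hP (i + 2) (by omega)).triArea_right,
          triArea_swap hc.2 (isNeg_pts B hp _).2 (isNeg_pts B hp _).2]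
        simp only [g]
        congr 4 <;> omega
    _ = -areaRep n B c p := by
        rw [Finset.sum_neg_distrib, Finset.sum_range_reflect (fun i => g (n - 2 + i)),
          hg.sum_range_add, hB_area]

/-- `ρJ` is a well-defined representation of `H_n`
(`r_{n-i} = r_{-i}` since indices are modulo `n`) and `Area ρJ = -Area ρ`. -/
theorem areaJ_neg (n : ℕ) (hn : 5 ≤ n) (ρ : H n →* PU11) :
    (∃ σ : H n →* PU11, ∀ i : ZMod n, σ (r n i) = ρ (r n (-i))) ∧
    (∀ σ : H n →* PU11, (∀ i : ZMod n, σ (r n i) = ρ (r n (-i))) →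
      ∀ a : ℝ, HasArea ρ a → HasArea σ (-a)) := by
  refine ⟨⟨ρ.comp (negIndex n), fun i => by rw [MonoidHom.comp_apply, negIndex_r]⟩, ?_⟩
  intro σ hσ a hρ B hB c p hc hp
  have hA : IsLift ρ (fun i => B (-i)) := isLift_iff.mpr fun i => by rw [hB.1, hσ, neg_neg]
  have hρA := hρ _ hA c _ hc (isNeg_pts B hp (2 * n - 1))
  linarith [areaRep_neg_index (by omega) hB hc hp]

end HView
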